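/- Let n ≥ 1, m ≥ 1, μ > 0, γ > 0, M₁ > 0, and T > 0. Let s₀,…,s_{m−1} ∈ ℝⁿ be nonzero vectors and ŷ₀,…,ŷ_{m−1} ∈ ℝⁿ satisfy s_lᵀ ŷ_l ≥ (M₁ + μ)‖s_l‖² for each l. Define B⁽⁰⁾ = (1/γ + μ) I and B⁽ˡ⁺¹⁾ = B⁽ˡ⁾ − (B⁽ˡ⁾ s_l)(B⁽ˡ⁾ s_l)ᵀ/(s_lᵀ B⁽ˡ⁾ s_l) + ŷ_l ŷ_lᵀ/(s_lᵀ ŷ_l) for l = 0,…,m−1. Assume the largest eigenvalue of each B⁽ˡ⁾ (l = 0,…,m−1) is at most T. Then det(B⁽ᵐ⁾) ≥ (1/γ + μ)ⁿ · ((M₁ + μ)/T)ᵐ. -/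

import Mathlib

open scoped RealInnerProductSpace

/-!
Each BFGS update multiplies the determinant by `sᵀy / sᵀBs` (a rank-two matrix determinant
lemma in which the `Bs`-term cancels exactly) and preserves positive definiteness. The curvature
condition bounds the numerator below by `(M₁ + μ)‖s‖²` and the eigenvalue bound gives
`sᵀBs ≤ T‖s‖²`, so every update multiplies the determinant by at least `(M₁ + μ)/T`, starting
from `det B⁽⁰⁾ = (1/γ + μ)ⁿ`.
-/

namespace Matrix

variable {ι K : Type*} [Fintype ι]

theorem IsSymm.dotProduct_mulVec_comm [CommSemiring K] {B : Matrix ι ι K} (hB : B.IsSymm)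
    (x y : ι → K) : x ⬝ᵥ B *ᵥ y = y ⬝ᵥ B *ᵥ x := by
  rw [dotProduct_mulVec, ← mulVec_transpose, hB.eq, dotProduct_comm]

theorem dotProduct_vecMulVec_self_mulVec [CommSemiring K] (u x : ι → K) :
    x ⬝ᵥ vecMulVec u u *ᵥ x = (u ⬝ᵥ x) ^ 2 := by
  rw [vecMulVec_mulVec, op_smul_eq_smul, dotProduct_smul, smul_eq_mul, dotProduct_comm, sq]

/-- When `sᵀBs = 0` both sides reduce to `xᵀBx`, since `_ / 0 = 0`. -/
theorem IsSymm.dotProduct_mulVec_sub_smul_self [Field K] {B : Matrix ι ι K} (hB : B.IsSymm)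
    (s x : ι → K) :
    (x - (s ⬝ᵥ B *ᵥ x / s ⬝ᵥ B *ᵥ s) • s) ⬝ᵥ B *ᵥ (x - (s ⬝ᵥ B *ᵥ x / s ⬝ᵥ B *ᵥ s) • s) =
      x ⬝ᵥ B *ᵥ x - (s ⬝ᵥ B *ᵥ x) ^ 2 / s ⬝ᵥ B *ᵥ s := by
  simp only [sub_dotProduct, mulVec_sub, dotProduct_sub, mulVec_smul, dotProduct_smul,
    smul_dotProduct, smul_eq_mul, hB.dotProduct_mulVec_comm x s]
  rcases eq_or_ne (s ⬝ᵥ B *ᵥ s) 0 with ha | ha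
  · simp [ha]
  · field_simp
    ring

theorem det_add_vecMulVec_add_vecMulVec [DecidableEq ι] [CommRing K]
    {A : Matrix ι ι K} (hA : IsUnit A.det) (u v w z : ι → K) :
    (A + vecMulVec u v + vecMulVec w z).det =
      A.det * ((1 + v ⬝ᵥ A⁻¹ *ᵥ u) * (1 + z ⬝ᵥ A⁻¹ *ᵥ w)
        - (v ⬝ᵥ A⁻¹ *ᵥ w) * (z ⬝ᵥ A⁻¹ *ᵥ u)) := by
  let U : Matrix ι (Fin 2) K := (of ![u, w])ᵀ
  let V : Matrix (Fin 2) ι K := of ![v, z]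
  have hUV : A + vecMulVec u v + vecMulVec w z = A + U * V := by
    ext i k
    simp [U, V, mul_apply, Fin.sum_univ_two, vecMulVec_apply, add_assoc]
  have hentry (j k : Fin 2) : (V * A⁻¹ * U) j k = V j ⬝ᵥ A⁻¹ *ᵥ Uᵀ k := by
    rw [Matrix.mul_assoc]
    simp [mul_apply, dotProduct, mulVec]
  rw [hUV, det_add_mul U V hA, det_fin_two]
  simp only [add_apply, hentry, one_apply_eq, one_apply_ne zero_ne_one,
    one_apply_ne one_ne_zero, zero_add]
  rfl

theorem IsHermitian.dotProduct_mulVec_le_of_eigenvalues_le [DecidableEq ι]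
    {A : Matrix ι ι ℝ} (hA : A.IsHermitian) {T : ℝ} (hT : ∀ i, hA.eigenvalues i ≤ T)
    (x : ι → ℝ) : x ⬝ᵥ A *ᵥ x ≤ T * (x ⬝ᵥ x) := by
  open scoped MatrixOrder in
  have hle : A ≤ algebraMap ℝ (Matrix ι ι ℝ) T :=
    le_algebraMap_of_spectrum_le (ha := hA) fun t ht ↦ by
      obtain ⟨i, rfl⟩ := hA.spectrum_real_eq_range_eigenvalues ▸ ht
      exact hT i
  have := (le_iff.mp hle).dotProduct_mulVec_nonneg x
  rwa [Algebra.algebraMap_eq_smul_one, star_trivial, sub_mulVec, dotProduct_sub, smul_mulVec,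
    one_mulVec, dotProduct_smul, smul_eq_mul, sub_nonneg] at this

def bfgsUpdate [Field K] (B : Matrix ι ι K) (s y : ι → K) : Matrix ι ι K :=
  B - (s ⬝ᵥ B *ᵥ s)⁻¹ • vecMulVec (B *ᵥ s) (B *ᵥ s) + (s ⬝ᵥ y)⁻¹ • vecMulVec y y

theorem det_bfgsUpdate [DecidableEq ι] [Field K] {B : Matrix ι ι K} (hB : B.IsSymm)
    (hdet : IsUnit B.det) {s : ι → K} (hs : s ⬝ᵥ B *ᵥ s ≠ 0) (y : ι → K) :
    (bfgsUpdate B s y).det = B.det * (s ⬝ᵥ y / s ⬝ᵥ B *ᵥ s) := by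
  have hinv_mulVec : B⁻¹ *ᵥ B *ᵥ s = s := by
    rw [mulVec_mulVec, nonsing_inv_mul _ hdet, one_mulVec]
  have hdot_inv : (B *ᵥ s) ⬝ᵥ B⁻¹ *ᵥ y = s ⬝ᵥ y := by
    rw [dotProduct_comm, hB.dotProduct_mulVec_comm, mulVec_mulVec, mul_nonsing_inv _ hdet,
      one_mulVec]
  have hrank_two : bfgsUpdate B s y = B + vecMulVec (B *ᵥ s) (-(s ⬝ᵥ B *ᵥ s)⁻¹ • B *ᵥ s)
      + vecMulVec y ((s ⬝ᵥ y)⁻¹ • y) := by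
    simp only [bfgsUpdate, vecMulVec_smul, neg_smul, vecMulVec_neg, sub_eq_add_neg]
  rw [hrank_two, det_add_vecMulVec_add_vecMulVec hdet]
  simp only [smul_dotProduct, smul_eq_mul, hinv_mulVec, hdot_inv]
  rw [dotProduct_comm (B *ᵥ s) s, dotProduct_comm y s, neg_mul, inv_mul_cancel₀ hs]
  rcases eq_or_ne (s ⬝ᵥ y) 0 with hy | hy
  · simp [hy]
  · field_simp
    ring

theorem posDef_bfgsUpdate {B : Matrix ι ι ℝ} (hB : B.PosDef) {s y : ι → ℝ}
    (hsy : 0 < s ⬝ᵥ y) : (bfgsUpdate B s y).PosDef := by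
  have hBsymm : B.IsSymm := isHermitian_iff_isSymm.mp hB.1
  refine .of_dotProduct_mulVec_pos ?_ fun x hx ↦ ?_
  · rw [isHermitian_iff_isSymm]
    simp [bfgsUpdate, IsSymm, hBsymm.eq]
  have hquad : x ⬝ᵥ bfgsUpdate B s y *ᵥ x =
      (x ⬝ᵥ B *ᵥ x - (s ⬝ᵥ B *ᵥ x) ^ 2 / s ⬝ᵥ B *ᵥ s) + (y ⬝ᵥ x) ^ 2 / s ⬝ᵥ y := by
    simp only [bfgsUpdate, add_mulVec, sub_mulVec, smul_mulVec, dotProduct_add,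
      dotProduct_sub, dotProduct_smul, dotProduct_vecMulVec_self_mulVec, smul_eq_mul]
    rw [dotProduct_comm (B *ᵥ s) x, hBsymm.dotProduct_mulVec_comm x s]
    ring
  rw [star_trivial, hquad, ← hBsymm.dotProduct_mulVec_sub_smul_self]
  set c := s ⬝ᵥ B *ᵥ x / s ⬝ᵥ B *ᵥ s
  rcases eq_or_ne (x - c • s) 0 with hz | hz
  · -- `x = c • s` with `c ≠ 0`, so the curvature term is `c² sᵀy > 0`.
    have hxs : x = c • s := sub_eq_zero.mp hz
    have hc : c ≠ 0 := fun hc ↦ hx (by simpa [hc] using hxs)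
    rw [hz, zero_dotProduct, zero_add, hxs, dotProduct_smul, smul_eq_mul, dotProduct_comm y s]
    have := mul_ne_zero hc hsy.ne'
    positivity
  · have := hB.dotProduct_mulVec_pos hz
    rw [star_trivial] at this
    positivity

theorem det_mul_div_le_det_bfgsUpdate [DecidableEq ι] {B : Matrix ι ι ℝ} (hB : B.PosDef)
    {s y : ι → ℝ} (hs : s ≠ 0) {c T : ℝ} (hc : 0 ≤ c) (hsy : c * (s ⬝ᵥ s) ≤ s ⬝ᵥ y)
    (hBs : s ⬝ᵥ B *ᵥ s ≤ T * (s ⬝ᵥ s)) : B.det * (c / T) ≤ (bfgsUpdate B s y).det := by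
  have hss : 0 < s ⬝ᵥ s := by simpa using dotProduct_star_self_pos_iff.mpr hs
  have ha : 0 < s ⬝ᵥ B *ᵥ s := by simpa using hB.dotProduct_mulVec_pos hs
  have hT : 0 < T := pos_of_mul_pos_left (ha.trans_le hBs) hss.le
  have hdet := hB.det_pos
  rw [det_bfgsUpdate (isHermitian_iff_isSymm.mp hB.1) (isUnit_iff_ne_zero.mpr hdet.ne') ha.ne' y]
  refine mul_le_mul_of_nonneg_left ((div_le_div_iff₀ hT ha).mpr ?_) hdet.le
  linarith [mul_le_mul_of_nonneg_left hBs hc, mul_le_mul_of_nonneg_right hsy hT.le]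

theorem det_mul_pow_le_det_of_bfgsUpdate [DecidableEq ι] {B : ℕ → Matrix ι ι ℝ}
    {s y : ℕ → ι → ℝ} {m : ℕ} {c T : ℝ} (hc : 0 < c) (hT : 0 < T) (hB₀ : (B 0).PosDef)
    (hs : ∀ l < m, s l ≠ 0) (hsy : ∀ l < m, c * (s l ⬝ᵥ s l) ≤ s l ⬝ᵥ y l)
    (hrec : ∀ l < m, B (l + 1) = bfgsUpdate (B l) (s l) (y l))
    (heig : ∀ l < m, ∀ hB : (B l).IsHermitian, ∀ i, hB.eigenvalues i ≤ T) :
    (B 0).det * (c / T) ^ m ≤ (B m).det := by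
  suffices h : ∀ l ≤ m, (B l).PosDef ∧ (B 0).det * (c / T) ^ l ≤ (B l).det from (h m le_rfl).2
  intro l
  induction l with
  | zero => exact fun _ ↦ ⟨hB₀, by simp⟩
  | succ l ih =>
    intro hl
    obtain ⟨hPD, hdet⟩ := ih (by omega)
    have hss : 0 < s l ⬝ᵥ s l := by simpa using dotProduct_star_self_pos_iff.mpr (hs l hl)
    have hBs := hPD.1.dotProduct_mulVec_le_of_eigenvalues_le (heig l hl hPD.1) (s l)
    rw [hrec l hl]
    refine ⟨posDef_bfgsUpdate hPD ((mul_pos hc hss).trans_le (hsy l hl)), ?_⟩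
    calc (B 0).det * (c / T) ^ (l + 1) = (B 0).det * (c / T) ^ l * (c / T) := by ring
      _ ≤ (B l).det * (c / T) := by gcongr
      _ ≤ _ := det_mul_div_le_det_bfgsUpdate hPD (hs l hl) hc.le (hsy l hl) hBs

end Matrix

theorem regularized_lbfgs_det_lower_bound_general (n m : ℕ)
    (μ γ M₁ T : ℝ) (hμ : 0 < μ) (hγ : 0 < γ) (hM₁ : 0 < M₁) (hT : 0 < T)
    (s yhat : ℕ → EuclideanSpace ℝ (Fin n))
    (hs : ∀ l < m, s l ≠ 0)
    (hsyhat : ∀ l < m, (M₁ + μ) * ‖s l‖ ^ 2 ≤ ⟪s l, yhat l⟫)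
    (Bseq : ℕ → Matrix (Fin n) (Fin n) ℝ)
    (hB0 : Bseq 0 = (1 / γ + μ) • (1 : Matrix (Fin n) (Fin n) ℝ))
    (hrec : ∀ l < m, Bseq (l + 1) =
      Bseq l
        - (⟪s l, Matrix.toEuclideanLin (Bseq l) (s l)⟫)⁻¹ •
            Matrix.vecMulVec (Matrix.toEuclideanLin (Bseq l) (s l))
              (Matrix.toEuclideanLin (Bseq l) (s l))
        + (⟪s l, yhat l⟫)⁻¹ • Matrix.vecMulVec (yhat l) (yhat l))
    (heig : ∀ l < m, ∀ (hherm : (Bseq l).IsHermitian), ∀ i : Fin n,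
      hherm.eigenvalues i ≤ T) :
    (1 / γ + μ) ^ n * ((M₁ + μ) / T) ^ m ≤ (Bseq m).det := by
  have hinner (v w : EuclideanSpace ℝ (Fin n)) : ⟪v, w⟫ = v.ofLp ⬝ᵥ w.ofLp := by
    rw [EuclideanSpace.inner_eq_star_dotProduct, star_trivial, dotProduct_comm]
  have hdet₀ : (Bseq 0).det = (1 / γ + μ) ^ n := by
    rw [hB0, Matrix.det_smul, Matrix.det_one, mul_one, Fintype.card_fin]
  rw [← hdet₀]
  refine Matrix.det_mul_pow_le_det_of_bfgsUpdate (s := fun l ↦ (s l).ofLp)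
    (y := fun l ↦ (yhat l).ofLp) (by positivity) hT
    (hB0 ▸ Matrix.PosDef.one.smul (by positivity)) (fun l hl ↦ ?_) (fun l hl ↦ ?_)
    (fun l hl ↦ ?_) heig
  · simpa using hs l hl
  · simpa [← hinner, real_inner_self_eq_norm_sq] using hsyhat l hl
  · rw [hrec l hl, hinner, hinner]
    rfl

/-- **Determinant lower bound for the regularized L-BFGS matrices.** Starting from
`B⁽⁰⁾ = (1/γ + μ) I` and performing `m` BFGS updates with pairs `(s_l, ŷ_l)` satisfying
`s_lᵀ ŷ_l ≥ (M₁ + μ)‖s_l‖²`, if the largest eigenvalue of each intermediate matrix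
`B⁽ˡ⁾` (`l = 0, …, m−1`) is at most `T`, then
`det(B⁽ᵐ⁾) ≥ (1/γ + μ)ⁿ ((M₁ + μ)/T)ᵐ`. -/
theorem regularized_lbfgs_det_lower_bound (n m : ℕ) (hn : 1 ≤ n) (hm : 1 ≤ m)
    (μ γ M₁ T : ℝ) (hμ : 0 < μ) (hγ : 0 < γ) (hM₁ : 0 < M₁) (hT : 0 < T)
    (s yhat : ℕ → EuclideanSpace ℝ (Fin n))
    (hs : ∀ l < m, s l ≠ 0)
    (hsyhat : ∀ l < m, (M₁ + μ) * ‖s l‖ ^ 2 ≤ ⟪s l, yhat l⟫)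
    (Bseq : ℕ → Matrix (Fin n) (Fin n) ℝ)
    (hB0 : Bseq 0 = (1 / γ + μ) • (1 : Matrix (Fin n) (Fin n) ℝ))
    (hrec : ∀ l < m, Bseq (l + 1) =
      Bseq l
        - (⟪s l, Matrix.toEuclideanLin (Bseq l) (s l)⟫)⁻¹ •
            Matrix.vecMulVec (Matrix.toEuclideanLin (Bseq l) (s l))
              (Matrix.toEuclideanLin (Bseq l) (s l))
        + (⟪s l, yhat l⟫)⁻¹ • Matrix.vecMulVec (yhat l) (yhat l))
    (heig : ∀ l < m, ∀ (hherm : (Bseq l).IsHermitian), ∀ i : Fin n,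
      hherm.eigenvalues i ≤ T) :
    (1 / γ + μ) ^ n * ((M₁ + μ) / T) ^ m ≤ (Bseq m).det :=
  regularized_lbfgs_det_lower_bound_general n m μ γ M₁ T hμ hγ hM₁ hT s yhat hs hsyhat Bseq hB0 hrec
    heig
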